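/- Suppose K has exactly 4 elements and τ(x) = x² (so τ is the unique order-2 automorphism of K). Let n ≥ 2 and let S, W be 1-dimensional non-degenerate subspaces of V such that S + W is non-degenerate. Then S = W or Ψ(s,w) = 0 for all s ∈ S, w ∈ W. -/

import Mathlib

/-! Write `S = K s`, `W = K w`. Over `𝔽₄` every non-zero `τ`-fixed scalar is `1` and
`c τ(c) = c³ = 1` for `c ≠ 0`, so `Ψ(s,s) = Ψ(w,w) = 1`, and if `c = Ψ(s,w) ≠ 0` the Gram
determinant `Ψ(s,s) Ψ(w,w) - Ψ(w,s) Ψ(s,w)` vanishes. Then `Ψ(s,s) w - Ψ(w,s) s` lies in the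
radical of `S + W`, so it is `0` and `w ∈ S`. -/

namespace FramePaper

variable {K : Type*} [Field K]

/-- The standard Hermitian form `Ψ(v,w) = ∑ i, v i * τ (w i)` on `Fin n → K`. -/
def Psi (τ : K → K) {n : ℕ} (v w : Fin n → K) : K :=
  ∑ i, v i * τ (w i)

lemma Psi_add_left (τ : K → K) {n : ℕ} (a b w : Fin n → K) :
    Psi τ (a + b) w = Psi τ a w + Psi τ b w := by
  simp [Psi, add_mul, Finset.sum_add_distrib]

lemma Psi_smul_left (τ : K → K) {n : ℕ} (c : K) (a w : Fin n → K) :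
    Psi τ (c • a) w = c * Psi τ a w := by
  simp [Psi, Finset.mul_sum, mul_assoc]

/-- The orthogonal complement `S^⊥ = {v | ∀ s ∈ S, Ψ(v,s) = 0}`. -/
def perp (τ : K → K) {n : ℕ} (S : Submodule K (Fin n → K)) :
    Submodule K (Fin n → K) where
  carrier := {v | ∀ s ∈ S, Psi τ v s = 0}
  add_mem' := by
    intro a b ha hb
    show ∀ s ∈ S, Psi τ (a + b) s = 0
    intro s hs
    rw [Psi_add_left, ha s hs, hb s hs, add_zero]
  zero_mem' := by
    show ∀ s ∈ S, Psi τ 0 s = 0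
    intro s hs
    simp [Psi]
  smul_mem' := by
    intro c a ha
    show ∀ s ∈ S, Psi τ (c • a) s = 0
    intro s hs
    rw [Psi_smul_left, ha s hs, mul_zero]

/-- A subspace `S` is non-degenerate iff `S ⊓ S^⊥ = ⊥`. -/
def Nondeg (τ : K → K) {n : ℕ} (S : Submodule K (Fin n → K)) : Prop :=
  S ⊓ perp τ S = ⊥

/-- Vertices of `G(V)`: the `1`-dimensional non-degenerate subspaces. -/
def IsVertex (τ : K → K) {n : ℕ} (S : Submodule K (Fin n → K)) : Prop :=
  Module.finrank K S = 1 ∧ Nondeg τ S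

/-- The graph `G(V)` on the `1`-dimensional non-degenerate subspaces of `V = Fin n → K`,
with `S, W` adjacent iff `S ≠ W` and `Ψ(s,w) = 0` for all `s ∈ S`, `w ∈ W`. -/
def FrameGraph (τ : K →+* K) (hτ2 : ∀ x, τ (τ x) = x) (n : ℕ) :
    SimpleGraph {S : Submodule K (Fin n → K) // IsVertex (⇑τ) S} where
  Adj S W := S ≠ W ∧ ∀ s ∈ S.1, ∀ w ∈ W.1, Psi (⇑τ) s w = 0
  symm := ⟨by
    rintro S W ⟨hne, h⟩
    refine ⟨hne.symm, fun w hw s hs => ?_⟩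
    have key : Psi (⇑τ) w s = τ (Psi (⇑τ) s w) := by
      simp only [Psi, map_sum, map_mul, hτ2]
      exact Finset.sum_congr rfl fun i _ => mul_comm _ _
    rw [key, h s hs w hw, map_zero]⟩
  loopless := ⟨fun S h => h.1 rfl⟩

lemma Psi_sub_left (τ : K → K) {n : ℕ} (a b w : Fin n → K) :
    Psi τ (a - b) w = Psi τ a w - Psi τ b w := by
  simp [Psi, sub_mul, Finset.sum_sub_distrib]

lemma Psi_add_right (τ : K →+* K) {n : ℕ} (v a b : Fin n → K) :
    Psi τ v (a + b) = Psi τ v a + Psi τ v b := by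
  simp [Psi, mul_add, Finset.sum_add_distrib]

lemma Psi_smul_right (τ : K →+* K) {n : ℕ} (c : K) (v w : Fin n → K) :
    Psi τ v (c • w) = τ c * Psi τ v w := by
  simp only [Psi, Pi.smul_apply, smul_eq_mul, map_mul, Finset.mul_sum]
  exact Finset.sum_congr rfl fun i _ => by ring

lemma Psi_swap (τ : K →+* K) (hτ2 : ∀ x, τ (τ x) = x) {n : ℕ} (v w : Fin n → K) :
    Psi τ w v = τ (Psi τ v w) := by
  simp only [Psi, map_sum, map_mul, hτ2]
  exact Finset.sum_congr rfl fun i _ => mul_comm _ _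

lemma mem_perp_span_iff (τ : K →+* K) {n : ℕ} {v : Fin n → K} {T : Set (Fin n → K)} :
    v ∈ perp τ (Submodule.span K T) ↔ ∀ t ∈ T, Psi τ v t = 0 := by
  refine ⟨fun h t ht => h t (Submodule.subset_span ht), fun h x hx => ?_⟩
  induction hx using Submodule.span_induction with
  | mem t ht => exact h t ht
  | zero => simp [Psi]
  | add x y _ _ hx hy => rw [Psi_add_right, hx, hy, add_zero]
  | smul c x _ hx => rw [Psi_smul_right, hx, mul_zero]

lemma Psi_eq_zero_of_mem_span_singleton (τ : K →+* K) {n : ℕ} {s w : Fin n → K}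
    (h : Psi τ s w = 0) : ∀ s' ∈ K ∙ s, ∀ w' ∈ K ∙ w, Psi τ s' w' = 0 := by
  intro s' hs' w' hw'
  obtain ⟨a, rfl⟩ := Submodule.mem_span_singleton.1 hs'
  obtain ⟨b, rfl⟩ := Submodule.mem_span_singleton.1 hw'
  rw [Psi_smul_left, Psi_smul_right, h, mul_zero, mul_zero]

lemma exists_ne_zero_eq_span_singleton {V : Type*} [AddCommGroup V] [Module K V]
    {S : Submodule K V} (hS : Module.finrank K S = 1) : ∃ s ≠ 0, S = K ∙ s := by
  have hS0 : S ≠ ⊥ := by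
    rintro rfl
    simp at hS
  obtain ⟨s, hsS, hs⟩ := Submodule.exists_mem_ne_zero_of_ne_bot hS0
  exact ⟨s, hs, eq_span_singleton_of_mem_of_finrank_eq_one hS hsS hs⟩

lemma Psi_self_ne_zero (τ : K →+* K) {n : ℕ} {s : Fin n → K} (hs : s ≠ 0)
    (hnd : Nondeg τ (K ∙ s)) : Psi τ s s ≠ 0 := by
  intro h
  have hrad : s ∈ (K ∙ s) ⊓ perp τ (K ∙ s) :=
    ⟨Submodule.mem_span_singleton_self s, (mem_perp_span_iff τ).2 (by simpa using h)⟩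
  rw [Nondeg] at hnd
  rw [hnd, Submodule.mem_bot] at hrad
  exact hs hrad

lemma smul_sub_smul_mem_perp_span_pair (τ : K →+* K) {n : ℕ} {s w : Fin n → K}
    (hgram : Psi τ s s * Psi τ w w = Psi τ w s * Psi τ s w) :
    Psi τ s s • w - Psi τ w s • s ∈ perp τ (Submodule.span K {s, w}) := by
  rw [mem_perp_span_iff]
  rintro t (rfl | rfl)
  · rw [Psi_sub_left, Psi_smul_left, Psi_smul_left, mul_comm, sub_self]
  · rw [Psi_sub_left, Psi_smul_left, Psi_smul_left, hgram, sub_self]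

lemma mem_span_singleton_of_gram_eq (τ : K →+* K) {n : ℕ} {s w : Fin n → K}
    (hss : Psi τ s s ≠ 0) (hgram : Psi τ s s * Psi τ w w = Psi τ w s * Psi τ s w)
    (hnd : Nondeg τ (K ∙ s ⊔ K ∙ w)) : w ∈ K ∙ s := by
  rw [← Submodule.span_insert, Nondeg] at hnd
  have hrad : Psi τ s s • w - Psi τ w s • s ∈
      Submodule.span K {s, w} ⊓ perp τ (Submodule.span K {s, w}) := by
    refine ⟨Submodule.sub_mem _ ?_ ?_, smul_sub_smul_mem_perp_span_pair τ hgram⟩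
    · exact Submodule.smul_mem _ _ (Submodule.subset_span (by simp))
    · exact Submodule.smul_mem _ _ (Submodule.subset_span (by simp))
  rw [hnd, Submodule.mem_bot, sub_eq_zero] at hrad
  rw [← inv_smul_smul₀ hss w, hrad, smul_smul]
  exact Submodule.smul_mem _ _ (Submodule.mem_span_singleton_self s)

lemma Psi_self_eq_one (τ : K →+* K) (hτ2 : ∀ x, τ (τ x) = x) (hτsq : ∀ x, τ x = x ^ 2)
    {n : ℕ} {s : Fin n → K} (hs : s ≠ 0) (hnd : Nondeg τ (K ∙ s)) : Psi τ s s = 1 := by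
  have hidem : IsIdempotentElem (Psi τ s s) := by
    rw [IsIdempotentElem, ← sq, ← hτsq, ← Psi_swap τ hτ2]
  exact (IsIdempotentElem.iff_eq_zero_or_one.1 hidem).resolve_left (Psi_self_ne_zero τ hs hnd)

lemma apply_mul_self_eq_one (τ : K →+* K) (hτ2 : ∀ x, τ (τ x) = x) (hτsq : ∀ x, τ x = x ^ 2)
    {c : K} (hc : c ≠ 0) : τ c * c = 1 := by
  have hc4 : c * (c ^ 2 * c) = c * 1 := by
    have := hτ2 c
    rw [hτsq, hτsq] at this
    linear_combination this
  rw [hτsq]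
  exact mul_left_cancel₀ hc hc4

theorem statement7_general (τ : K →+* K) (hτ2 : ∀ x, τ (τ x) = x)
    (hτsq : ∀ x, τ x = x ^ 2)
    (n : ℕ)
    (S W : Submodule K (Fin n → K))
    (hS1 : Module.finrank K S = 1) (hSnd : Nondeg (⇑τ) S)
    (hW1 : Module.finrank K W = 1) (hWnd : Nondeg (⇑τ) W)
    (hsum : Nondeg (⇑τ) (S ⊔ W)) :
    S = W ∨ ∀ s ∈ S, ∀ w ∈ W, Psi (⇑τ) s w = 0 := by
  obtain ⟨s, hs, rfl⟩ := exists_ne_zero_eq_span_singleton hS1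
  obtain ⟨w, hw, rfl⟩ := exists_ne_zero_eq_span_singleton hW1
  by_cases hsw : Psi τ s w = 0
  · exact Or.inr (Psi_eq_zero_of_mem_span_singleton τ hsw)
  have hgram : Psi τ s s * Psi τ w w = Psi τ w s * Psi τ s w := by
    rw [Psi_self_eq_one τ hτ2 hτsq hs hSnd, Psi_self_eq_one τ hτ2 hτsq hw hWnd,
      Psi_swap τ hτ2, one_mul, apply_mul_self_eq_one τ hτ2 hτsq hsw]
  have hwS : w ∈ K ∙ s := mem_span_singleton_of_gram_eq τ (Psi_self_ne_zero τ hs hSnd) hgram hsum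
  exact Or.inl (eq_span_singleton_of_mem_of_finrank_eq_one hS1 hwS hw)

/-- Suppose `K` has exactly `4` elements and `τ(x) = x²`. For `n ≥ 2`,
if `S` and `W` are `1`-dimensional non-degenerate subspaces of `V` such that `S + W` is
non-degenerate, then `S = W` or `S` and `W` are orthogonal. -/
theorem statement7 (τ : K →+* K) (hτne : (⇑τ : K → K) ≠ id) (hτ2 : ∀ x, τ (τ x) = x)
    (hK : Nat.card K = 4) (hτsq : ∀ x, τ x = x ^ 2)
    (n : ℕ) (hn : 2 ≤ n)
    (S W : Submodule K (Fin n → K))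
    (hS1 : Module.finrank K S = 1) (hSnd : Nondeg (⇑τ) S)
    (hW1 : Module.finrank K W = 1) (hWnd : Nondeg (⇑τ) W)
    (hsum : Nondeg (⇑τ) (S ⊔ W)) :
    S = W ∨ ∀ s ∈ S, ∀ w ∈ W, Psi (⇑τ) s w = 0 :=
  statement7_general τ hτ2 hτsq n S W hS1 hSnd hW1 hWnd hsum

end FramePaper
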